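/- arXiv:1009.5435 — 2 statements merged into one kernel-verified Lean document; each statement's English description precedes it below -/
import Mathlib

section
/- A bipartite graph G with perfect matching M has M as its unique perfect matching if and only if G[V] contains an edge (x, x') ∈ M such that x or x' has degree 1 in G, and the graph obtained by deleting x and x' again has this property recursively (i.e., G is reducible to the empty graph by repeatedly removing a matched pair containing a degree-1 vertex). -/
open SimpleGraph

variable {V : Type*}

/-- `M` is a matching in `G`: a set of edges of `G`, pairwise not sharing a vertex. -/
def IsMatchingIn (G : SimpleGraph V) (M : Set (Sym2 V)) : Prop :=
  M ⊆ G.edgeSet ∧ ∀ e ∈ M, ∀ f ∈ M, e ≠ f → ∀ v : V, ¬(v ∈ e ∧ v ∈ f)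

/-- The set of vertices saturated by the edge set `M`. -/
def sat (M : Set (Sym2 V)) : Set V := {v | ∃ e ∈ M, v ∈ e}

/-- A list of edges alternates w.r.t. `M` if consecutive edges alternate membership in `M`. -/
def Alternates (M : Set (Sym2 V)) (l : List (Sym2 V)) : Prop :=
  l.Chain' (fun e f => (e ∈ M ↔ f ∉ M))

/-- An `M`-alternating cycle: an even cycle whose edges alternate between `M` and `E \ M`. -/
def IsAltCycle (G : SimpleGraph V) (M : Set (Sym2 V)) {v : V} (c : G.Walk v v) : Prop :=
  c.IsCycle ∧ c.edges.length % 2 = 0 ∧ Alternates M c.edges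

/-- `M` is uniquely restricted: it is the unique perfect matching of the subgraph of `G`
induced by the `M`-saturated vertices. -/
def UniquelyRestricted (G : SimpleGraph V) (M : Set (Sym2 V)) : Prop :=
  IsMatchingIn G M ∧ ∀ N : Set (Sym2 V), IsMatchingIn G N →
    (∀ e ∈ N, ∀ v ∈ e, v ∈ sat M) → sat N = sat M → N = M

/-- Arc relation of the digraph `D(G,M)` for a bipartite graph with class `X`:
an arc `x₁ → x₂` between distinct `M`-saturated `X`-vertices whenever
`(x₁, x₂') ∈ E \ M`, where `x₂'` is the `M`-partner of `x₂`. -/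
def DArc (G : SimpleGraph V) (M : Set (Sym2 V)) (X : Set V) (x₁ x₂ : V) : Prop :=
  x₁ ∈ X ∧ x₂ ∈ X ∧ x₁ ≠ x₂ ∧ (∃ y, s(x₁, y) ∈ M) ∧
    ∃ y, s(x₂, y) ∈ M ∧ s(x₁, y) ∈ G.edgeSet ∧ s(x₁, y) ∉ M

/-- Reducibility: the vertex set `S` can be reduced to `∅` by repeatedly deleting both
endpoints of a matching edge one of whose endpoints has degree 1 in the current
induced subgraph. -/
inductive Reducible (G : SimpleGraph V) (M : Set (Sym2 V)) : Set V → Prop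
  | empty : Reducible G M ∅
  | step (S : Set V) (x x' : V) (hx : x ∈ S) (hx' : x' ∈ S) (hm : s(x, x') ∈ M)
      (hdeg : {y ∈ S | G.Adj x y} = {x'} ∨ {y ∈ S | G.Adj x' y} = {x})
      (h : Reducible G M (S \ {x, x'})) : Reducible G M S

/-!
A degree-one vertex forces its matched edge into every perfect matching, so along a reduction
any two perfect matchings agree. Conversely, if no matched edge has an endpoint of degree one,
every vertex `x ∈ X` has a neighbour `nb x` off its matched edge, and the map sending `x` to the
partner of `nb x` stays in the finite class `X`, hence has a cycle. That cycle is an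
`M`-alternating cycle, and switching `M` along it gives a second perfect matching. Since deleting
a forced matched pair keeps the matching unique, induction finishes the proof.
-/

section sat

variable {M N : Set (Sym2 V)} {x y : V}

lemma mem_sat_iff : x ∈ sat M ↔ ∃ y, s(x, y) ∈ M := by
  simp only [sat, Set.mem_ofPred_eq, Sym2.mem_iff_exists]
  exact ⟨fun ⟨_, he, y, hy⟩ => ⟨y, hy ▸ he⟩, fun ⟨y, hy⟩ => ⟨_, hy, y, rfl⟩⟩

lemma sat_union : sat (M ∪ N) = sat M ∪ sat N := by
  ext v
  simp only [sat, Set.mem_union, Set.mem_ofPred_eq]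
  grind

lemma sat_insert : sat (insert s(x, y) M) = {x, y} ∪ sat M := by
  ext v
  simp only [sat, Set.mem_union, Set.mem_insert_iff, Set.mem_singleton_iff, Set.mem_ofPred_eq]
  grind

lemma eq_empty_of_sat_eq_empty (h : sat M = ∅) : M = ∅ :=
  Set.eq_empty_of_forall_notMem fun e he =>
    (Set.eq_empty_iff_forall_notMem.mp h) e.out.1 ⟨e, he, e.out_fst_mem⟩

end sat

namespace IsMatchingIn

variable {G : SimpleGraph V} {M N : Set (Sym2 V)} {x y z : V}

lemma mono (hM : IsMatchingIn G M) (hNM : N ⊆ M) : IsMatchingIn G N :=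
  ⟨hNM.trans hM.1, fun e he f hf => hM.2 e (hNM he) f (hNM hf)⟩

lemma eq_of_mem_of_mem (hM : IsMatchingIn G M) {e f : Sym2 V} (he : e ∈ M) (hf : f ∈ M)
    (hxe : x ∈ e) (hxf : x ∈ f) : e = f := by
  by_contra hef
  exact hM.2 e he f hf hef x ⟨hxe, hxf⟩

lemma right_unique (hM : IsMatchingIn G M) (hy : s(x, y) ∈ M) (hz : s(x, z) ∈ M) : y = z :=
  Sym2.congr_right.mp (hM.eq_of_mem_of_mem hy hz (Sym2.mem_mk_left x y) (Sym2.mem_mk_left x z))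

lemma sat_diff_singleton (hM : IsMatchingIn G M) (he : s(x, y) ∈ M) :
    sat (M \ {s(x, y)}) = sat M \ {x, y} := by
  ext v
  simp only [mem_sat_iff, Set.mem_sdiff, Set.mem_singleton_iff, Set.mem_insert_iff]
  constructor
  · rintro ⟨w, hw, hne⟩
    refine ⟨⟨w, hw⟩, ?_⟩
    rintro (rfl | rfl)
    · exact hne (congrArg _ (hM.right_unique hw he))
    · exact hne (by rw [hM.right_unique hw (Sym2.eq_swap ▸ he), Sym2.eq_swap])
  · rintro ⟨⟨w, hw⟩, hv⟩
    refine ⟨w, hw, fun h => hv ?_⟩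
    rcases Sym2.eq_iff.mp h with ⟨rfl, -⟩ | ⟨rfl, -⟩ <;> simp

lemma insert (hM : IsMatchingIn G M) (hxy : G.Adj x y) (hx : x ∉ sat M) (hy : y ∉ sat M) :
    IsMatchingIn G (insert s(x, y) M) := by
  have hout : ∀ e ∈ M, ∀ v ∈ e, v ∉ s(x, y) := by
    intro e he v hve hv
    rcases Sym2.mem_iff.mp hv with rfl | rfl
    exacts [hx ⟨e, he, hve⟩, hy ⟨e, he, hve⟩]
  refine ⟨Set.insert_subset hxy hM.1, ?_⟩
  rintro e (rfl | he) f (rfl | hf) hef v ⟨hve, hvf⟩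
  · exact hef rfl
  · exact hout f hf v hvf hve
  · exact hout e he v hve hvf
  · exact hM.2 e he f hf hef v ⟨hve, hvf⟩

lemma mk_mem_of_neighbors_eq_singleton (hM : IsMatchingIn G M) (hx : x ∈ sat M)
    (h : {w ∈ sat M | G.Adj x w} = {y}) : s(x, y) ∈ M := by
  obtain ⟨w, hw⟩ := mem_sat_iff.mp hx
  have hwy : w ∈ ({y} : Set V) :=
    h ▸ ⟨mem_sat_iff.mpr ⟨x, Sym2.eq_swap ▸ hw⟩, hM.1 hw⟩
  rwa [← Set.mem_singleton_iff.mp hwy]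

end IsMatchingIn

theorem Reducible.eq_of_sat_eq {G : SimpleGraph V} {M : Set (Sym2 V)} {S : Set V}
    (hred : Reducible G M S) {N N' : Set (Sym2 V)} (hN : IsMatchingIn G N)
    (hN' : IsMatchingIn G N') (hNS : sat N = S) (hN'S : sat N' = S) : N = N' := by
  induction hred generalizing N N' with
  | empty => rw [eq_empty_of_sat_eq_empty hNS, eq_empty_of_sat_eq_empty hN'S]
  | step S x x' hx hx' _ hdeg _ ih =>
    subst hNS
    have forced : ∀ {P}, IsMatchingIn G P → sat P = sat N → s(x, x') ∈ P := by
      intro P hP hPS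
      rw [← hPS] at hx hx' hdeg
      rcases hdeg with h | h
      · exact hP.mk_mem_of_neighbors_eq_singleton hx h
      · exact Sym2.eq_swap ▸ hP.mk_mem_of_neighbors_eq_singleton hx' h
    have hxN := forced hN rfl
    have hxN' := forced hN' hN'S
    rw [← Set.insert_sdiff_self_of_mem hxN, ← Set.insert_sdiff_self_of_mem hxN',
      ih (hN.mono Set.sdiff_subset) (hN'.mono Set.sdiff_subset) (hN.sat_diff_singleton hxN)
        (by rw [hN'.sat_diff_singleton hxN', hN'S])]

section switch

variable {G : SimpleGraph V} {M A : Set (Sym2 V)}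

/-- `M` switched along an alternating cycle whose edges outside `M` form `A`. -/
def switch (M A : Set (Sym2 V)) : Set (Sym2 V) := {e ∈ M | ∀ v ∈ e, v ∉ sat A} ∪ A

lemma switch_isMatchingIn (hM : IsMatchingIn G M) (hA : IsMatchingIn G A) :
    IsMatchingIn G (switch M A) := by
  refine ⟨Set.union_subset (fun e he => hM.1 he.1) hA.1, ?_⟩
  rintro e (⟨he, heA⟩ | he) f (⟨hf, hfA⟩ | hf) hef v ⟨hve, hvf⟩
  · exact hM.2 e he f hf hef v ⟨hve, hvf⟩
  · exact heA v hve ⟨f, hf, hvf⟩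
  · exact hfA v hvf ⟨e, he, hve⟩
  · exact hA.2 e he f hf hef v ⟨hve, hvf⟩

lemma sat_switch (hAM : sat A ⊆ sat M)
    (hclosed : ∀ v w, s(v, w) ∈ M → v ∈ sat A → w ∈ sat A) :
    sat (switch M A) = sat M := by
  have hrest : sat {e ∈ M | ∀ v ∈ e, v ∉ sat A} = sat M \ sat A := by
    ext v
    constructor
    · rintro ⟨e, ⟨he, heA⟩, hve⟩
      exact ⟨⟨e, he, hve⟩, heA v hve⟩
    · rintro ⟨hv, hvA⟩
      obtain ⟨w, hw⟩ := mem_sat_iff.mp hv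
      refine ⟨_, ⟨hw, fun u hu => ?_⟩, Sym2.mem_mk_left v w⟩
      rcases Sym2.mem_iff.mp hu with rfl | rfl
      exacts [hvA, fun huA => hvA (hclosed _ _ (Sym2.eq_swap ▸ hw) huA)]
  rw [switch, sat_union, hrest, Set.sdiff_union_of_subset hAM]

end switch

lemma exists_ne_of_alternating_cycle {G : SimpleGraph V} {X : Set V} {M : Set (Sym2 V)}
    (hbip : ∀ v w, G.Adj v w → (v ∈ X ↔ w ∉ X)) (hM : IsMatchingIn G M)
    {C : Set V} {nb g : V → V} (hCX : C ⊆ X) (hC : C.Nonempty) (hg : Set.BijOn g C C)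
    (hadj : ∀ x ∈ C, G.Adj x (nb x)) (hnM : ∀ x ∈ C, s(x, nb x) ∉ M)
    (hpart : ∀ x ∈ C, s(nb x, g x) ∈ M) :
    ∃ N, IsMatchingIn G N ∧ sat N = sat M ∧ N ≠ M := by
  set A := (fun x => s(x, nb x)) '' C
  have hsatA : ∀ v, v ∈ sat A ↔ ∃ x ∈ C, v = x ∨ v = nb x := by
    intro v
    simp only [sat, A, Set.mem_ofPred_eq, Set.exists_mem_image, Sym2.mem_iff]
  have hnbX : ∀ x ∈ C, nb x ∉ X := fun x hx => (hbip x (nb x) (hadj x hx)).mp (hCX hx)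
  have hA : IsMatchingIn G A := by
    refine ⟨Set.image_subset_iff.mpr hadj, ?_⟩
    rintro _ ⟨x, hx, rfl⟩ _ ⟨y, hy, rfl⟩ hne v ⟨hvx, hvy⟩
    have hxy : x ≠ y := fun h => hne (h ▸ rfl)
    rcases Sym2.mem_iff.mp hvx with rfl | rfl <;> rcases Sym2.mem_iff.mp hvy with h | h
    · exact hxy h
    · exact hnbX y hy (h ▸ hCX hx)
    · exact hnbX x hx (h ▸ hCX hy)
    · exact hxy (hg.injOn hx hy (hM.right_unique (hpart x hx) (h ▸ hpart y hy)))
  have hAM : sat A ⊆ sat M := by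
    rintro v hv
    obtain ⟨x, hx, rfl | rfl⟩ := (hsatA v).mp hv
    · obtain ⟨u, hu, rfl⟩ := hg.surjOn hx
      exact mem_sat_iff.mpr ⟨nb u, Sym2.eq_swap ▸ hpart u hu⟩
    · exact mem_sat_iff.mpr ⟨g x, hpart x hx⟩
  have hclosed : ∀ v w, s(v, w) ∈ M → v ∈ sat A → w ∈ sat A := by
    intro v w hvw hv
    obtain ⟨x, hx, rfl | rfl⟩ := (hsatA v).mp hv
    · obtain ⟨u, hu, rfl⟩ := hg.surjOn hx
      rw [← hM.right_unique (Sym2.eq_swap ▸ hpart u hu) hvw]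
      exact (hsatA _).mpr ⟨u, hu, Or.inr rfl⟩
    · rw [← hM.right_unique (hpart x hx) hvw]
      exact (hsatA _).mpr ⟨g x, hg.mapsTo hx, Or.inl rfl⟩
  obtain ⟨x, hx⟩ := hC
  refine ⟨switch M A, switch_isMatchingIn hM hA, sat_switch hAM hclosed, fun h => hnM x hx ?_⟩
  exact h ▸ Or.inr ⟨x, hx, rfl⟩

lemma Set.MapsTo.exists_bijOn_subset {α : Type*} [Finite α] {g : α → α} {T : Set α}
    (hT : T.Nonempty) (hg : Set.MapsTo g T T) : ∃ C ⊆ T, C.Nonempty ∧ Set.BijOn g C C := by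
  obtain ⟨C, hCT, ⟨hC, hgC⟩, hmin⟩ :=
    exists_minimal_le_of_wellFoundedLT (fun C => C.Nonempty ∧ Set.MapsTo g C C) T ⟨hT, hg⟩
  have hsurj : Set.SurjOn g C C :=
    hmin ⟨hC.image g, fun _ ⟨x, hx, hgx⟩ => hgx ▸ Set.mem_image_of_mem g (hgC hx)⟩
      hgC.image_subset
  exact ⟨C, hCT, hC, (C.toFinite.surjOn_iff_bijOn_of_mapsTo hgC).mp hsurj⟩

lemma exists_neighbors_eq_singleton_of_unique [Finite V] {G : SimpleGraph V} {X : Set V}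
    {M : Set (Sym2 V)} (hbip : ∀ v w, G.Adj v w → (v ∈ X ↔ w ∉ X)) (hM : IsMatchingIn G M)
    (hne : M.Nonempty) (huniq : ∀ N, IsMatchingIn G N → sat N = sat M → N = M) :
    ∃ x x', s(x, x') ∈ M ∧ {y ∈ sat M | G.Adj x y} = {x'} := by
  by_contra! hdeg
  have hstep : ∀ x ∈ sat M, ∃ y z, G.Adj x y ∧ s(x, y) ∉ M ∧ s(y, z) ∈ M := by
    intro x hx
    obtain ⟨x', hx'⟩ := mem_sat_iff.mp hx
    have hx'mem : x' ∈ {y ∈ sat M | G.Adj x y} := ⟨⟨_, hx', Sym2.mem_mk_right x x'⟩, hM.1 hx'⟩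
    obtain ⟨y, ⟨hyM, hxy⟩, hyx'⟩ : ∃ y ∈ {y ∈ sat M | G.Adj x y}, y ≠ x' := by
      by_contra! h
      exact hdeg x x' hx' (Set.eq_singleton_iff_unique_mem.mpr ⟨hx'mem, h⟩)
    obtain ⟨z, hz⟩ := mem_sat_iff.mp hyM
    exact ⟨y, z, hxy, fun h => hyx' (hM.right_unique h hx'), hz⟩
  choose! nb g hadj hnM hpart using hstep
  have hgX : Set.MapsTo g (sat M ∩ X) (sat M ∩ X) := by
    rintro x ⟨hx, hxX⟩
    have hnbX : nb x ∉ X := (hbip _ _ (hadj x hx)).mp hxX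
    refine ⟨mem_sat_iff.mpr ⟨nb x, Sym2.eq_swap ▸ hpart x hx⟩, ?_⟩
    by_contra hgx
    exact hnbX ((hbip _ _ (hM.1 (hpart x hx))).mpr hgx)
  have hT : (sat M ∩ X).Nonempty := by
    obtain ⟨⟨a, b⟩, he⟩ := hne
    by_cases ha : a ∈ X
    · exact ⟨a, ⟨_, he, Sym2.mem_mk_left a b⟩, ha⟩
    · refine ⟨b, ⟨_, he, Sym2.mem_mk_right a b⟩, by_contra fun hb => ?_⟩
      exact ha ((hbip _ _ (hM.1 he)).mpr hb)
  obtain ⟨C, hCT, hC, hgC⟩ := hgX.exists_bijOn_subset hT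
  obtain ⟨N, hN, hNM, hne⟩ := exists_ne_of_alternating_cycle hbip hM
    (hCT.trans Set.inter_subset_right) hC hgC (fun x hx => hadj x (hCT hx).1)
    (fun x hx => hnM x (hCT hx).1) (fun x hx => hpart x (hCT hx).1)
  exact hne (huniq N hN hNM)

theorem reducible_sat_of_unique [Finite V] {G : SimpleGraph V} {X : Set V} {M : Set (Sym2 V)}
    (hbip : ∀ v w, G.Adj v w → (v ∈ X ↔ w ∉ X)) (hM : IsMatchingIn G M) (M' : Set (Sym2 V))
    (hM'M : M' ⊆ M) (huniq : ∀ N, IsMatchingIn G N → sat N = sat M' → N = M') :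
    Reducible G M (sat M') := by
  induction M' using WellFoundedLT.induction with
  | _ M' ih =>
  have hM' := hM.mono hM'M
  rcases M'.eq_empty_or_nonempty with rfl | hne
  · simpa [sat] using Reducible.empty (G := G) (M := M)
  obtain ⟨x, x', he, hdeg⟩ := exists_neighbors_eq_singleton_of_unique hbip hM' hne huniq
  have hx : x ∈ sat M' := ⟨_, he, Sym2.mem_mk_left x x'⟩
  have hx' : x' ∈ sat M' := ⟨_, he, Sym2.mem_mk_right x x'⟩
  refine .step _ x x' hx hx' (hM'M he) (Or.inl hdeg) ?_
  rw [← hM'.sat_diff_singleton he]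
  refine ih _ (Set.sdiff_singleton_ssubset.mpr he) (Set.sdiff_subset.trans hM'M) fun N hN hNS => ?_
  rw [hM'.sat_diff_singleton he] at hNS
  have hxN : x ∉ sat N := by simp [hNS]
  have hx'N : x' ∉ sat N := by simp [hNS]
  have hins : insert s(x, x') N = M' := by
    refine huniq _ (hN.insert (hM'.1 he) hxN hx'N) ?_
    rw [sat_insert, hNS, Set.union_sdiff_cancel (Set.pair_subset hx hx')]
  rw [← hins, Set.insert_sdiff_self_of_notMem fun h => hxN ⟨_, h, Sym2.mem_mk_left x x'⟩]

/-- a bipartite graph `G` with perfect matching `M` has `M` as its unique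
perfect matching iff `G` is reducible to the empty graph by repeatedly removing a
matched pair containing a degree-1 vertex. -/
theorem stmt13 [Fintype V] (G : SimpleGraph V) (X : Set V) (M : Set (Sym2 V))
    (hbip : ∀ v w, G.Adj v w → (v ∈ X ↔ w ∉ X)) (hM : IsMatchingIn G M)
    (hperf : sat M = Set.univ) :
    (∀ N : Set (Sym2 V), IsMatchingIn G N → sat N = Set.univ → N = M) ↔
      Reducible G M Set.univ := by
  refine ⟨fun huniq => ?_, fun hred N hN hNS => hred.eq_of_sat_eq hN hM hNS hperf⟩
  rw [← hperf]
  exact reducible_sat_of_unique hbip hM M subset_rfl fun N hN hNS => huniq N hN (hNS.trans hperf)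
end

section
/- Let G be a bipartite graph all of whose maximum matchings are uniquely restricted, and let M be a maximum matching. Then D(G,M) is acyclic, and moreover the matching obtained from M by switching along any M-alternating even path starting at a free vertex is again a maximum matching of G and hence also admits no alternating cycle. -/
open SimpleGraph

variable {V : Type*}

/-- `M` is a maximum matching of `G`. -/
def IsMaximumMatching (G : SimpleGraph V) (M : Set (Sym2 V)) : Prop :=
  IsMatchingIn G M ∧ ∀ N : Set (Sym2 V), IsMatchingIn G N → N.ncard ≤ M.ncard

/-- An `M`-alternating path: a path whose edges alternate, starting with an edge
of `E \ M`. -/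
def IsAltPath (G : SimpleGraph V) (M : Set (Sym2 V)) {u v : V} (p : G.Walk u v) : Prop :=
  p.IsPath ∧ Alternates M p.edges ∧ ∀ e, p.edges.head? = some e → e ∉ M

lemma partner_unique {G : SimpleGraph V} {M : Set (Sym2 V)} (hM : IsMatchingIn G M)
    {a y y' : V} (h : s(a,y) ∈ M) (h' : s(a,y') ∈ M) : y = y' := by
  by_contra hne
  have hne2 : s(a,y) ≠ s(a,y') := by
    intro he
    rw [Sym2.eq_iff] at he
    rcases he with ⟨-, h2⟩ | ⟨h1, h2⟩
    · exact hne h2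
    · exact hne (h2.trans h1)
  exact hM.2 _ h _ h' hne2 a ⟨Sym2.mem_mk_left a y, Sym2.mem_mk_left a y'⟩

lemma alternates_get {M : Set (Sym2 V)} {l : List (Sym2 V)} (h : Alternates M l)
    (i : ℕ) (hi : i < l.length) (h0 : 0 < l.length) :
    (l.get ⟨i, hi⟩ ∈ M) ↔ (l.get ⟨0, h0⟩ ∈ M ↔ i % 2 = 0) := by
  induction i with
  | zero => simp
  | succ m ih =>
    have hm : m < l.length := by omega
    have hstep : (l.get ⟨m, by omega⟩ ∈ M ↔ l.get ⟨m+1, by omega⟩ ∉ M) := (List.isChain_iff_getElem.mp h) m (by omega)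
    have hih := ih hm
    have hpar : ((m+1) % 2 = 0 ↔ ¬ (m % 2 = 0)) := by omega
    tauto

lemma walk_edges_get {G : SimpleGraph V} {u v : V} (p : G.Walk u v) (i : ℕ)
    (hi : i < p.edges.length) :
    p.edges.get ⟨i, hi⟩ = s(p.getVert i, p.getVert (i+1)) := by
  induction p generalizing i with
  | nil => simp at hi
  | @cons a b c h q ih =>
    cases i with
    | zero => simp [Walk.getVert_cons_succ]
    | succ m =>
      simp only [Walk.edges_cons, List.get_cons_succ, Walk.getVert_cons_succ]
      exact ih m (by simpa using hi)

lemma walk_support_get {G : SimpleGraph V} {u v : V} (p : G.Walk u v) (i : ℕ)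
    (hi : i < p.support.length) :
    p.support.get ⟨i, hi⟩ = p.getVert i := by
  induction p generalizing i with
  | nil =>
    simp only [Walk.support_nil, List.length_singleton] at hi
    interval_cases i
    simp
  | @cons a b c h q ih =>
    cases i with
    | zero => simp
    | succ m =>
      simp only [Walk.support_cons, List.get_cons_succ, Walk.getVert_cons_succ]
      exact ih m (by simpa using hi)

lemma path_getVert_inj {G : SimpleGraph V} {u v : V} {p : G.Walk u v} (hp : p.IsPath)
    {i j : ℕ} (hi : i ≤ p.length) (hj : j ≤ p.length) (h : p.getVert i = p.getVert j) :
    i = j := by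
  have hnd := hp.support_nodup
  have hl : p.support.length = p.length + 1 := p.length_support
  have h1 : p.support.get ⟨i, by omega⟩ = p.support.get ⟨j, by omega⟩ := by
    rw [walk_support_get, walk_support_get]; exact h
  have := (List.Nodup.get_inj_iff hnd).mp h1
  simpa using congrArg Fin.val this

lemma cycle_getVert_inj {G : SimpleGraph V} {w : V} {c : G.Walk w w} (hc : c.IsCycle)
    {i j : ℕ} (hi : i < c.length) (hj : j < c.length) (h : c.getVert i = c.getVert j) :
    i = j := by
  have hnd := hc.2
  have hl : c.support.length = c.length + 1 := c.length_support
  have htl : c.support.tail.length = c.length := by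
    rw [List.length_tail, hl]; omega
  have key : ∀ a b : ℕ, 1 ≤ a → a ≤ c.length → 1 ≤ b → b ≤ c.length →
      c.getVert a = c.getVert b → a = b := by
    intro a b ha1 ha2 hb1 hb2 hab
    have h1 : c.support.tail.get ⟨a-1, by omega⟩ = c.support.tail.get ⟨b-1, by omega⟩ := by
      rw [List.get_tail, List.get_tail, walk_support_get, walk_support_get]
      show c.getVert (a-1+1) = c.getVert (b-1+1)
      rw [Nat.sub_add_cancel ha1, Nat.sub_add_cancel hb1]; exact hab
    have := (List.Nodup.get_inj_iff hnd).mp h1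
    have := congrArg Fin.val this
    simp only at this
    omega
  rcases Nat.eq_zero_or_pos i with hi0 | hi1
  · rcases Nat.eq_zero_or_pos j with hj0 | hj1
    · omega
    · subst hi0
      rw [c.getVert_zero] at h
      have hw : c.getVert c.length = c.getVert j := c.getVert_length.trans h
      have := key c.length j (by omega) (le_refl _) hj1 hj.le hw
      omega
  · rcases Nat.eq_zero_or_pos j with hj0 | hj1
    · subst hj0
      rw [c.getVert_zero] at h
      have hw : c.getVert i = c.getVert c.length := h.trans c.getVert_length.symm
      have := key i c.length hi1 hi.le (by omega) (le_refl _) hw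
      omega
    · exact key i j hi1 hi.le hj1 hj.le h

lemma cycle_swap (G : SimpleGraph V) (N : Set (Sym2 V)) (hUR : UniquelyRestricted G N)
    (n : ℕ) (hn : 2 ≤ n) (hev : n % 2 = 0) (r : ℕ) (hr : r < 2) (u : ℕ → V)
    (hu0 : u n = u 0)
    (hinj : ∀ i j, i < n → j < n → u i = u j → i = j)
    (hE : ∀ i, i < n → s(u i, u (i+1)) ∈ G.edgeSet)
    (hN : ∀ i, i < n → (s(u i, u (i+1)) ∈ N ↔ i % 2 = r)) : False := by
  classical
  have hMat := hUR.1
  set e : ℕ → Sym2 V := fun i => s(u i, u (i+1)) with he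
  set S : Set (Sym2 V) := {x | ∃ i, i < n ∧ x = e i} with hS
  have hEe : ∀ i, i < n → e i ∈ G.edgeSet := hE
  have hNe : ∀ i, i < n → (e i ∈ N ↔ i % 2 = r) := hN
  clear hE hN
  -- dispose of n = 2
  rcases eq_or_lt_of_le hn with hn2 | hn3
  · have he01 : e 1 = e 0 := by
      show s(u 1, u 2) = s(u 0, u 1)
      rw [show (2:ℕ) = n by omega, hu0, Sym2.eq_swap]
    have h0 := hNe 0 (by omega)
    have h1 := hNe 1 (by omega)
    rw [he01] at h1
    by_cases hm : e 0 ∈ N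
    · have := h0.mp hm; have := h1.mp hm; omega
    · have ha : ¬ (0 % 2 = r) := fun hh => hm (h0.mpr hh)
      have hb : ¬ (1 % 2 = r) := fun hh => hm (h1.mpr hh)
      omega
  -- now 3 ≤ n (together with even: 4 ≤ n), but we only need 2 < n
  have hinj' : ∀ i j, i ≤ n → j ≤ n → u i = u j →
      i = j ∨ (i = 0 ∧ j = n) ∨ (i = n ∧ j = 0) := by
    intro i j hi hj hij
    rcases eq_or_lt_of_le hi with hi' | hi' <;> rcases eq_or_lt_of_le hj with hj' | hj'
    · omega
    · subst hi'; rw [hu0] at hij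
      have := hinj 0 j (by omega) hj' hij; omega
    · subst hj'; rw [hu0] at hij
      have := hinj i 0 hi' (by omega) hij; omega
    · exact Or.inl (hinj i j hi' hj' hij)
  -- previous index
  set pv : ℕ → ℕ := fun j => if j = 0 then n - 1 else j - 1 with hpv
  have hpv1 : ∀ j, j < n → pv j < n := by intro j hj; simp only [hpv]; split <;> omega
  have hpv2 : ∀ j, j < n → u j ∈ e (pv j) := by
    intro j hj
    simp only [he, Sym2.mem_iff, hpv]
    split
    · subst j
      right; rw [show n - 1 + 1 = n by omega, hu0]
    · right; rw [show j - 1 + 1 = j by omega]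
  have hpv3 : ∀ j, j < n → (pv j) % 2 ≠ j % 2 := by
    intro j hj; simp only [hpv]; split <;> omega
  -- edges at a vertex
  have hat : ∀ j, j < n → ∀ i, i < n → (u j ∈ e i) → i = j ∨ i = pv j := by
    intro j hj i hi hmem
    simp only [he, Sym2.mem_iff] at hmem
    rcases hmem with h1 | h1
    · exact Or.inl (hinj i j hi hj h1.symm)
    · have := hinj' (i+1) j (by omega) (by omega) h1.symm
      simp only [hpv]
      rcases this with h2 | ⟨h2, h3⟩ | ⟨h2, h3⟩ <;> [skip; omega; skip]
      · right; split <;> omega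
      · right; split <;> omega
  -- normalize vertex of an edge to index < n
  have hvtx : ∀ i, i < n → ∀ w, w ∈ e i → ∃ j, j < n ∧ u j = w := by
    intro i hi w hw
    simp only [he, Sym2.mem_iff] at hw
    rcases hw with h1 | h1
    · exact ⟨i, hi, h1.symm⟩
    · rcases eq_or_lt_of_le (show i + 1 ≤ n by omega) with h2 | h2
      · exact ⟨0, by omega, by rw [← hu0, ← h2]; exact h1.symm⟩
      · exact ⟨i+1, h2, h1.symm⟩
  -- the r-parity edge at a vertex is in N, the other not
  have hsel : ∀ j, j < n → ∃ t, t < n ∧ t % 2 = r ∧ u j ∈ e t := by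
    intro j hj
    by_cases h : j % 2 = r
    · exact ⟨j, hj, h, by simp [he, Sym2.mem_iff]⟩
    · refine ⟨pv j, hpv1 j hj, ?_, hpv2 j hj⟩
      have := hpv3 j hj; omega
  have hsel' : ∀ j, j < n → ∃ t, t < n ∧ ¬ (t % 2 = r) ∧ u j ∈ e t := by
    intro j hj
    by_cases h : j % 2 = r
    · refine ⟨pv j, hpv1 j hj, ?_, hpv2 j hj⟩
      have := hpv3 j hj; omega
    · exact ⟨j, hj, h, by simp [he, Sym2.mem_iff]⟩
  have hsatN : ∀ j, j < n → u j ∈ sat N := by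
    intro j hj
    obtain ⟨t, ht, htr, htm⟩ := hsel j hj
    exact ⟨e t, (hNe t ht).mpr htr, htm⟩
  set N' : Set (Sym2 V) := symmDiff N S with hN'
  have hmemN' : ∀ x, x ∈ N' ↔ (x ∈ N ∧ x ∉ S) ∨ (x ∈ S ∧ x ∉ N) := by
    intro x; exact Set.mem_symmDiff
  -- edges of S are in N iff parity r
  
  -- key: f in N \ S cannot meet a non-r edge
  have hkey : ∀ f, f ∈ N → f ∉ S → ∀ i, i < n → ¬ (i % 2 = r) → ∀ w, w ∈ f → w ∈ e i → False := by
    intro f hf hfS i hi hir w hwf hwe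
    obtain ⟨j, hj, hjw⟩ := hvtx i hi w hwe
    obtain ⟨t, ht, htr, htm⟩ := hsel j hj
    have hetN : e t ∈ N := (hNe t ht).mpr htr
    have hfne : f ≠ e t := fun h => hfS ⟨t, ht, h⟩
    exact hMat.2 f hf (e t) hetN hfne w ⟨hwf, hjw ▸ htm⟩
  -- N' is a matching
  have hmatch : IsMatchingIn G N' := by
    constructor
    · intro x hx
      rcases (hmemN' x).mp hx with ⟨h1, -⟩ | ⟨⟨i, hi, h1⟩, -⟩
      · exact hMat.1 h1
      · exact h1 ▸ hEe i hi
    · intro f hf g hg hfg w hw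
      obtain ⟨hwf, hwg⟩ := hw
      rcases (hmemN' f).mp hf with ⟨hf1, hf2⟩ | ⟨⟨i, hi, hfi⟩, hf2⟩ <;>
        rcases (hmemN' g).mp hg with ⟨hg1, hg2⟩ | ⟨⟨j, hj, hgj⟩, hg2⟩
      · exact hMat.2 f hf1 g hg1 hfg w ⟨hwf, hwg⟩
      · have hjr : ¬ (j % 2 = r) := fun h => hg2 (hgj ▸ (hNe j hj).mpr h)
        exact hkey f hf1 hf2 j hj hjr w hwf (hgj ▸ hwg)
      · have hir : ¬ (i % 2 = r) := fun h => hf2 (hfi ▸ (hNe i hi).mpr h)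
        exact hkey g hg1 hg2 i hi hir w hwg (hfi ▸ hwf)
      · have hir : ¬ (i % 2 = r) := fun h => hf2 (hfi ▸ (hNe i hi).mpr h)
        have hjr : ¬ (j % 2 = r) := fun h => hg2 (hgj ▸ (hNe j hj).mpr h)
        have hij : i ≠ j := fun h => hfg (hfi.trans (h ▸ hgj.symm))
        obtain ⟨m, hm, hmw⟩ := hvtx i hi w (hfi ▸ hwf)
        have h1 := hat m hm i hi (hmw ▸ (hfi ▸ hwf))
        have h2 := hat m hm j hj (hmw ▸ (hgj ▸ hwg))
        have := hpv3 m hm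
        rcases h1 with h1 | h1 <;> rcases h2 with h2 | h2 <;> omega
  -- endpoints of N' are saturated by N
  have hends : ∀ f ∈ N', ∀ w ∈ f, w ∈ sat N := by
    intro f hf w hwf
    rcases (hmemN' f).mp hf with ⟨h1, -⟩ | ⟨⟨i, hi, h1⟩, -⟩
    · exact ⟨f, h1, hwf⟩
    · obtain ⟨j, hj, hjw⟩ := hvtx i hi w (h1 ▸ hwf)
      exact hjw ▸ hsatN j hj
  -- sat N' = sat N
  have hsat : sat N' = sat N := by
    ext w
    constructor
    · rintro ⟨f, hf, hwf⟩
      exact hends f hf w hwf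
    · rintro ⟨f, hf, hwf⟩
      by_cases hfS : f ∈ S
      · obtain ⟨i, hi, hfi⟩ := hfS
        obtain ⟨j, hj, hjw⟩ := hvtx i hi w (hfi ▸ hwf)
        obtain ⟨t, ht, htr, htm⟩ := hsel' j hj
        have : e t ∈ N' := (hmemN' _).mpr (Or.inr ⟨⟨t, ht, rfl⟩, fun h => htr ((hNe t ht).mp h)⟩)
        exact ⟨e t, this, hjw ▸ htm⟩
      · exact ⟨f, (hmemN' f).mpr (Or.inl ⟨hf, hfS⟩), hwf⟩
  have heq := hUR.2 N' hmatch hends hsat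
  -- but N' ≠ N
  set t : ℕ := if r = 0 then 1 else 0 with ht
  have ht1 : t < n := by simp only [ht]; split <;> omega
  have ht2 : ¬ (t % 2 = r) := by simp only [ht]; split <;> omega
  have hetN : e t ∉ N := fun h => ht2 ((hNe t ht1).mp h)
  have : e t ∈ N' := (hmemN' _).mpr (Or.inr ⟨⟨t, ht1, rfl⟩, hetN⟩)
  rw [heq] at this
  exact hetN this

lemma range_filter_odd_eq_image :
    ∀ n : ℕ, n % 2 = 0 → {i : ℕ | i < n ∧ i % 2 = 1} = (fun i => i + 1) '' {i : ℕ | i < n ∧ i % 2 = 0} := by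
  intro n hn
  ext j
  simp only [Set.mem_setOf_eq, Set.mem_image]
  constructor
  · rintro ⟨hj, hj2⟩
    exact ⟨j - 1, ⟨by omega, by omega⟩, by show j - 1 + 1 = j; omega⟩
  · rintro ⟨i, ⟨hi, hi2⟩, hij⟩
    have : i + 1 = j := hij
    omega

lemma path_swap [Finite V] (G : SimpleGraph V) (M : Set (Sym2 V)) (hM : IsMatchingIn G M)
    (n : ℕ) (hev : n % 2 = 0) (u : ℕ → V)
    (hinj : ∀ i j, i ≤ n → j ≤ n → u i = u j → i = j)
    (hE : ∀ i, i < n → s(u i, u (i+1)) ∈ G.edgeSet)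
    (hN : ∀ i, i < n → (s(u i, u (i+1)) ∈ M ↔ i % 2 = 1))
    (hfree : u 0 ∉ sat M) :
    IsMatchingIn G (symmDiff M {x | ∃ i, i < n ∧ x = s(u i, u (i+1))}) ∧
      (symmDiff M {x | ∃ i, i < n ∧ x = s(u i, u (i+1))}).ncard = M.ncard := by
  classical
  set e : ℕ → Sym2 V := fun i => s(u i, u (i+1)) with he
  set S : Set (Sym2 V) := {x | ∃ i, i < n ∧ x = e i} with hS
  have hEe : ∀ i, i < n → e i ∈ G.edgeSet := hE
  have hNe : ∀ i, i < n → (e i ∈ M ↔ i % 2 = 1) := hN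
  clear hE hN
  set N' : Set (Sym2 V) := symmDiff M S with hN'def
  have hmemN' : ∀ x, x ∈ N' ↔ (x ∈ M ∧ x ∉ S) ∨ (x ∈ S ∧ x ∉ M) := by
    intro x; exact Set.mem_symmDiff
  -- edges at a vertex
  have hat : ∀ j, j ≤ n → ∀ i, i < n → (u j ∈ e i) → i = j ∨ i + 1 = j := by
    intro j hj i hi hmem
    simp only [he, Sym2.mem_iff] at hmem
    rcases hmem with h1 | h1
    · exact Or.inl (hinj i j (by omega) hj h1.symm)
    · exact Or.inr (hinj (i+1) j (by omega) hj h1.symm)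
  -- e is injective on [0, n)
  have heinj : ∀ i j, i < n → j < n → e i = e j → i = j := by
    intro i j hi hj hij
    simp only [he, Sym2.eq_iff] at hij
    rcases hij with ⟨h1, h2⟩ | ⟨h1, h2⟩
    · exact hinj i j (by omega) (by omega) h1
    · have := hinj i (j+1) (by omega) (by omega) h1
      have := hinj (i+1) j (by omega) (by omega) h2
      omega
  -- f ∈ M \ S cannot meet an even-index edge
  have hkey : ∀ f, f ∈ M → f ∉ S → ∀ i, i < n → i % 2 = 0 → ∀ w, w ∈ f → w ∈ e i → False := by
    intro f hf hfS i hi hir w hwf hwe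
    simp only [he, Sym2.mem_iff] at hwe
    rcases hwe with h1 | h1
    · -- w = u i
      rcases Nat.eq_zero_or_pos i with h0 | h0
      · subst h0; exact hfree ⟨f, hf, h1 ▸ hwf⟩
      · -- e (i-1) ∈ M contains u i
        have hi1 : i - 1 < n := by omega
        have hm : e (i-1) ∈ M := (hNe (i-1) hi1).mpr (by omega)
        have hmemv : u i ∈ e (i-1) := by
          simp only [he, Sym2.mem_iff]
          right; rw [show i - 1 + 1 = i by omega]
        have hfne : f ≠ e (i-1) := fun h => hfS ⟨i-1, hi1, h⟩
        exact hM.2 f hf (e (i-1)) hm hfne w ⟨hwf, h1 ▸ hmemv⟩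
    · -- w = u (i+1), and i+1 < n since i even, n even
      have hi1 : i + 1 < n := by omega
      have hm : e (i+1) ∈ M := (hNe (i+1) hi1).mpr (by omega)
      have hmemv : u (i+1) ∈ e (i+1) := by simp [he, Sym2.mem_iff]
      have hfne : f ≠ e (i+1) := fun h => hfS ⟨i+1, hi1, h⟩
      exact hM.2 f hf (e (i+1)) hm hfne w ⟨hwf, h1 ▸ hmemv⟩
  have hmatch : IsMatchingIn G N' := by
    constructor
    · intro x hx
      rcases (hmemN' x).mp hx with ⟨h1, -⟩ | ⟨⟨i, hi, h1⟩, -⟩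
      · exact hM.1 h1
      · exact h1 ▸ hEe i hi
    · intro f hf g hg hfg w hw
      obtain ⟨hwf, hwg⟩ := hw
      rcases (hmemN' f).mp hf with ⟨hf1, hf2⟩ | ⟨⟨i, hi, hfi⟩, hf2⟩ <;>
        rcases (hmemN' g).mp hg with ⟨hg1, hg2⟩ | ⟨⟨j, hj, hgj⟩, hg2⟩
      · exact hM.2 f hf1 g hg1 hfg w ⟨hwf, hwg⟩
      · have hjr : j % 2 = 0 := by
          have : ¬ (j % 2 = 1) := fun h => hg2 (hgj ▸ (hNe j hj).mpr h)
          omega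
        exact hkey f hf1 hf2 j hj hjr w hwf (hgj ▸ hwg)
      · have hir : i % 2 = 0 := by
          have : ¬ (i % 2 = 1) := fun h => hf2 (hfi ▸ (hNe i hi).mpr h)
          omega
        exact hkey g hg1 hg2 i hi hir w hwg (hfi ▸ hwf)
      · have hir : i % 2 = 0 := by
          have : ¬ (i % 2 = 1) := fun h => hf2 (hfi ▸ (hNe i hi).mpr h)
          omega
        have hjr : j % 2 = 0 := by
          have : ¬ (j % 2 = 1) := fun h => hg2 (hgj ▸ (hNe j hj).mpr h)
          omega
        have hij : i ≠ j := fun h => hfg (hfi.trans (h ▸ hgj.symm))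
        -- w is in both e i and e j
        have hwi : w ∈ e i := hfi ▸ hwf
        have hwj : w ∈ e j := hgj ▸ hwg
        simp only [he, Sym2.mem_iff] at hwi
        rcases hwi with h1 | h1
        · have h2 := hat i (by omega) j hj (h1 ▸ hwj)
          omega
        · have h2 := hat (i+1) (by omega) j hj (h1 ▸ hwj)
          omega
  refine ⟨hmatch, ?_⟩
  -- cardinality
  have hfinM : M.Finite := Set.toFinite _
  have hfinS : S.Finite := Set.toFinite _
  have hdisj : Disjoint (M \ S) (S \ M) := by
    rw [Set.disjoint_left]
    rintro x ⟨h1, h2⟩ ⟨h3, h4⟩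
    exact h2 h3
  have hdisj2 : Disjoint (M \ S) (M ∩ S) := by
    rw [Set.disjoint_left]
    rintro x ⟨h1, h2⟩ ⟨h3, h4⟩
    exact h2 h4
  have hN'eq : N' = (M \ S) ∪ (S \ M) := by
    ext x
    rw [hmemN' x]
    simp [Set.mem_diff]
  have hMeq : M = (M \ S) ∪ (M ∩ S) := by
    ext x
    simp only [Set.mem_union, Set.mem_diff, Set.mem_inter_iff]
    tauto
  have hcard1 : N'.ncard = (M \ S).ncard + (S \ M).ncard := by
    rw [hN'eq]
    exact Set.ncard_union_eq hdisj hfinM.diff hfinS.diff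
  have hcard2 : M.ncard = (M \ S).ncard + (M ∩ S).ncard := by
    conv_lhs => rw [hMeq]
    exact Set.ncard_union_eq hdisj2 hfinM.diff (hfinM.inter_of_left _)
  -- identify S \ M and M ∩ S as images
  have hSM : S \ M = e '' {i | i < n ∧ i % 2 = 0} := by
    ext x
    simp only [Set.mem_diff, hS, Set.mem_setOf_eq, Set.mem_image]
    constructor
    · rintro ⟨⟨i, hi, rfl⟩, hx⟩
      refine ⟨i, ⟨hi, ?_⟩, rfl⟩
      have : ¬ (i % 2 = 1) := fun h => hx ((hNe i hi).mpr h)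
      omega
    · rintro ⟨i, ⟨hi, hi2⟩, rfl⟩
      exact ⟨⟨i, hi, rfl⟩, fun h => by have := (hNe i hi).mp h; omega⟩
  have hMS : M ∩ S = e '' {i | i < n ∧ i % 2 = 1} := by
    ext x
    simp only [Set.mem_inter_iff, hS, Set.mem_setOf_eq, Set.mem_image]
    constructor
    · rintro ⟨hx, ⟨i, hi, rfl⟩⟩
      exact ⟨i, ⟨hi, (hNe i hi).mp hx⟩, rfl⟩
    · rintro ⟨i, ⟨hi, hi2⟩, rfl⟩
      exact ⟨(hNe i hi).mpr hi2, ⟨i, hi, rfl⟩⟩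
  have hinjOn1 : Set.InjOn e {i | i < n ∧ i % 2 = 0} := by
    rintro i ⟨hi, -⟩ j ⟨hj, -⟩ hij
    exact heinj i j hi hj hij
  have hinjOn2 : Set.InjOn e {i | i < n ∧ i % 2 = 1} := by
    rintro i ⟨hi, -⟩ j ⟨hj, -⟩ hij
    exact heinj i j hi hj hij
  have hidx : ({i : ℕ | i < n ∧ i % 2 = 1}).ncard = ({i : ℕ | i < n ∧ i % 2 = 0}).ncard := by
    rw [range_filter_odd_eq_image n hev]
    exact Set.ncard_image_of_injOn (fun a _ b _ h => by omega)
  rw [hcard1, hcard2, hSM, hMS, Set.ncard_image_of_injOn hinjOn1,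
    Set.ncard_image_of_injOn hinjOn2, hidx]

lemma no_alt_cycle (G : SimpleGraph V) (N : Set (Sym2 V)) (hUR : UniquelyRestricted G N)
    {w : V} (c : G.Walk w w) (hc : IsAltCycle G N c) : False := by
  classical
  obtain ⟨hcyc, hev, halt⟩ := hc
  have hlen : c.edges.length = c.length := c.length_edges
  have h3 : 3 ≤ c.length := hcyc.three_le_length
  have h0 : 0 < c.edges.length := by omega
  set r : ℕ := if c.edges.get ⟨0, h0⟩ ∈ N then 0 else 1 with hrdef
  have hN : ∀ i, i < c.length → (s(c.getVert i, c.getVert (i+1)) ∈ N ↔ i % 2 = r) := by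
    intro i hi
    have hag := alternates_get halt i (by omega) h0
    rw [walk_edges_get c i (by omega)] at hag
    rw [hag]
    by_cases h : c.edges.get ⟨0, h0⟩ ∈ N
    · simp only [hrdef, if_pos h]
      tauto
    · simp only [hrdef, if_neg h]
      have hpar : (i % 2 = 1) ↔ ¬ (i % 2 = 0) := by omega
      tauto
  refine cycle_swap G N hUR c.length (by omega) (by omega) r ?_ c.getVert ?_ ?_ ?_ hN
  · simp only [hrdef]; split <;> omega
  · rw [c.getVert_length, c.getVert_zero]
  · intro i j hi hj h
    exact cycle_getVert_inj hcyc hi hj h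
  · intro i hi
    exact (c.adj_getVert_succ hi)

lemma transGen_chain {α : Type*} {R : α → α → Prop} {a b : α} (h : Relation.TransGen R a b) :
    ∃ m, 1 ≤ m ∧ ∃ u : ℕ → α, u 0 = a ∧ u m = b ∧ ∀ i, i < m → R (u i) (u (i+1)) := by
  induction h with
  | @single c hr =>
    refine ⟨1, le_refl 1, fun i => if i = 0 then a else c, by simp, by simp, ?_⟩
    intro i hi
    interval_cases i
    simpa using hr
  | @tail b c hab hbc ih =>
    obtain ⟨m, hm, u, hu0, hum, hstep⟩ := ih
    refine ⟨m + 1, by omega, fun i => if i = m + 1 then c else u i,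
      by simp only [if_neg (by omega : ¬ (0:ℕ) = m+1)]; exact hu0, by simp, ?_⟩
    intro i hi
    rcases Nat.lt_or_ge i m with h1 | h1
    · simp only [if_neg (by omega : ¬ i = m + 1), if_neg (by omega : ¬ i + 1 = m + 1)]
      exact hstep i h1
    · have : i = m := by omega
      subst this
      simp only [if_neg (by omega : ¬ i = i + 1), if_pos rfl]
      rw [hum]
      exact hbc

lemma cycle_reduce {α : Type*} {R : α → α → Prop} :
    ∀ m, 1 ≤ m → ∀ u : ℕ → α, u m = u 0 → (∀ i, i < m → R (u i) (u (i+1))) →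
    ∃ k, 1 ≤ k ∧ ∃ w : ℕ → α, w k = w 0 ∧ (∀ i, i < k → R (w i) (w (i+1))) ∧
      (∀ i j, i < k → j < k → w i = w j → i = j) := by
  intro m
  induction m using Nat.strong_induction_on with
  | _ m ih =>
    intro hm u hu hR
    by_cases hinj : ∀ i j, i < m → j < m → u i = u j → i = j
    · exact ⟨m, hm, u, hu, hR, hinj⟩
    · push_neg at hinj
      obtain ⟨i, j, hi, hj, heq, hne⟩ := hinj
      have key : ∀ a b : ℕ, a < b → b < m → u a = u b → ∃ k, 1 ≤ k ∧ ∃ w : ℕ → α,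
          w k = w 0 ∧ (∀ i, i < k → R (w i) (w (i+1))) ∧
          (∀ i j, i < k → j < k → w i = w j → i = j) := by
        intro a b hab hbm hu'
        refine ih (b - a) (by omega) (by omega) (fun t => u (a + t)) ?_ ?_
        · show u (a + (b - a)) = u (a + 0)
          rw [show a + (b - a) = b by omega, show a + 0 = a from rfl]
          exact hu'.symm
        · intro t ht
          have := hR (a + t) (by omega)
          rwa [show a + t + 1 = a + (t+1) by omega] at this
      rcases Nat.lt_or_ge i j with h | h
      · exact key i j h hj heq
      · exact key j i (by omega) hi heq.symm

lemma matching_shared {G : SimpleGraph V} {M : Set (Sym2 V)} (hM : IsMatchingIn G M)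
    {a b c : V} (h1 : s(a, c) ∈ M) (h2 : s(b, c) ∈ M) : a = b := by
  rw [Sym2.eq_swap] at h1 h2
  exact partner_unique hM h1 h2

/-- if all maximum matchings of a bipartite `G` are uniquely restricted and
`M` is maximum, then `D(G,M)` is acyclic, and switching `M` along any even `M`-alternating
path starting at a free vertex yields again a maximum matching with no alternating cycle. -/
theorem stmt18 [Fintype V] (G : SimpleGraph V) (X : Set V) (M : Set (Sym2 V))
    (hbip : ∀ v w, G.Adj v w → (v ∈ X ↔ w ∉ X))
    (hall : ∀ N : Set (Sym2 V), IsMaximumMatching G N → UniquelyRestricted G N)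
    (hmax : IsMaximumMatching G M) :
    (∀ x, ¬ Relation.TransGen (DArc G M X) x x) ∧
      ∀ (v a : V) (p : G.Walk v a), v ∉ sat M → IsAltPath G M p →
        p.edges.length % 2 = 0 →
        IsMaximumMatching G (symmDiff M {e | e ∈ p.edges}) ∧
          ¬ ∃ (w : V) (c : G.Walk w w),
            IsAltCycle G (symmDiff M {e | e ∈ p.edges}) c := by
  classical
  have hUR := hall M hmax
  constructor
  · -- Part 1: D(G,M) acyclic
    intro x hx
    obtain ⟨m, hm, u, hu0, hum, hstep⟩ := transGen_chain hx
    obtain ⟨k, hk, xx, hxx0, hxstep, hxinj⟩ :=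
      cycle_reduce m hm u (hum.trans hu0.symm) hstep
    have hk2 : 2 ≤ k := by
      rcases eq_or_lt_of_le hk with h1 | h1
      · exfalso
        have harc := hxstep 0 (by omega)
        have h10 : xx 1 = xx 0 := by rw [← h1] at hxx0; exact hxx0
        exact harc.2.2.1 h10.symm
      · omega
    have hX : ∀ i, i < k → xx i ∈ X := fun i hi => (hxstep i hi).1
    have hex : ∀ i, i ≤ k → ∃ y, s(xx i, y) ∈ M := by
      intro i hi
      rcases eq_or_lt_of_le hi with h1 | h1
      · subst h1
        rw [hxx0]
        exact (hxstep 0 (by omega)).2.2.2.1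
      · exact (hxstep i h1).2.2.2.1
    set pm : ℕ → V := fun i => if h : i ≤ k then (hex i h).choose else xx 0 with hpmdef
    have hpm : ∀ i, (h : i ≤ k) → s(xx i, pm i) ∈ M := by
      intro i h
      simp only [hpmdef, dif_pos h]
      exact (hex i h).choose_spec
    have hA : ∀ i, i < k → s(xx i, pm (i+1)) ∈ G.edgeSet ∧ s(xx i, pm (i+1)) ∉ M := by
      intro i hi
      obtain ⟨y, hy1, hy2, hy3⟩ := (hxstep i hi).2.2.2.2
      have : y = pm (i+1) := partner_unique hmax.1 hy1 (hpm (i+1) (by omega))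
      exact this ▸ ⟨hy2, hy3⟩
    have hpmX : ∀ i, i < k → pm (i+1) ∉ X := by
      intro i hi
      have hadj : G.Adj (xx i) (pm (i+1)) := G.mem_edgeSet.mp (hA i hi).1
      exact (hbip _ _ hadj).mp (hX i hi)
    have hxinj' : ∀ a b, 1 ≤ a → a ≤ k → 1 ≤ b → b ≤ k → xx a = xx b → a = b := by
      intro a b ha1 ha2 hb1 hb2 hab
      rcases eq_or_lt_of_le ha2 with h1 | h1 <;> rcases eq_or_lt_of_le hb2 with h2 | h2
      · omega
      · subst h1; rw [hxx0] at hab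
        have := hxinj 0 b (by omega) h2 hab; omega
      · subst h2; rw [hxx0] at hab
        have := hxinj a 0 h1 (by omega) hab; omega
      · exact hxinj a b h1 h2 hab
    have hpminj : ∀ a b, 1 ≤ a → a ≤ k → 1 ≤ b → b ≤ k → pm a = pm b → a = b := by
      intro a b ha1 ha2 hb1 hb2 hab
      have h1 := hpm a ha2
      have h2 := hpm b hb2
      rw [hab] at h1
      exact hxinj' a b ha1 ha2 hb1 hb2 (matching_shared hmax.1 h1 h2)
    set u2 : ℕ → V := fun j => if j % 2 = 0 then xx (j / 2) else pm (j / 2 + 1) with hu2def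
    have hu2e : ∀ i, u2 (2*i) = xx i := by
      intro i
      simp only [hu2def]
      rw [if_pos (by omega)]
      congr 1
      omega
    have hu2o : ∀ i, u2 (2*i+1) = pm (i+1) := by
      intro i
      simp only [hu2def]
      rw [if_neg (by omega)]
      congr 1
      omega
    refine cycle_swap G M hUR (2*k) (by omega) (by omega) 1 (by omega) u2 ?_ ?_ ?_ ?_
    · show u2 (2*k) = u2 (2*0)
      rw [hu2e, hu2e]
      exact hxx0
    · -- injectivity
      intro a b ha hb heq
      rcases Nat.mod_two_eq_zero_or_one a with hpa | hpa <;>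
        rcases Nat.mod_two_eq_zero_or_one b with hpb | hpb
      · obtain ⟨i, rfl⟩ : ∃ i, a = 2*i := ⟨a/2, by omega⟩
        obtain ⟨j, rfl⟩ : ∃ j, b = 2*j := ⟨b/2, by omega⟩
        rw [hu2e, hu2e] at heq
        have := hxinj i j (by omega) (by omega) heq
        omega
      · obtain ⟨i, rfl⟩ : ∃ i, a = 2*i := ⟨a/2, by omega⟩
        obtain ⟨j, rfl⟩ : ∃ j, b = 2*j+1 := ⟨b/2, by omega⟩
        rw [hu2e, hu2o] at heq
        exact absurd (heq ▸ hX i (by omega)) (hpmX j (by omega))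
      · obtain ⟨i, rfl⟩ : ∃ i, a = 2*i+1 := ⟨a/2, by omega⟩
        obtain ⟨j, rfl⟩ : ∃ j, b = 2*j := ⟨b/2, by omega⟩
        rw [hu2o, hu2e] at heq
        exact absurd (heq.symm ▸ hX j (by omega)) (hpmX i (by omega))
      · obtain ⟨i, rfl⟩ : ∃ i, a = 2*i+1 := ⟨a/2, by omega⟩
        obtain ⟨j, rfl⟩ : ∃ j, b = 2*j+1 := ⟨b/2, by omega⟩
        rw [hu2o, hu2o] at heq
        have := hpminj (i + 1) (j + 1) (by omega) (by omega) (by omega) (by omega) heq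
        omega
    · -- edges
      intro j hj
      rcases Nat.mod_two_eq_zero_or_one j with hp | hp
      · obtain ⟨i, rfl⟩ : ∃ i, j = 2*i := ⟨j/2, by omega⟩
        rw [hu2e, hu2o]
        exact (hA i (by omega)).1
      · obtain ⟨i, rfl⟩ : ∃ i, j = 2*i+1 := ⟨j/2, by omega⟩
        rw [show 2*i+1+1 = 2*(i+1) by omega, hu2o, hu2e]
        rw [Sym2.eq_swap]
        exact hmax.1.1 (hpm (i + 1) (by omega))
    · -- membership parity
      intro j hj
      rcases Nat.mod_two_eq_zero_or_one j with hp | hp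
      · obtain ⟨i, rfl⟩ : ∃ i, j = 2*i := ⟨j/2, by omega⟩
        rw [hu2e, hu2o]
        constructor
        · intro h
          exact absurd h (hA i (by omega)).2
        · intro h
          omega
      · obtain ⟨i, rfl⟩ : ∃ i, j = 2*i+1 := ⟨j/2, by omega⟩
        rw [show 2*i+1+1 = 2*(i+1) by omega, hu2o, hu2e]
        constructor
        · intro h
          omega
        · intro h
          rw [Sym2.eq_swap]
          exact hpm (i + 1) (by omega)
  · -- Part 2
    intro v a p hfree hap heven
    have hlen : p.edges.length = p.length := p.length_edges
    have heven' : p.length % 2 = 0 := by omega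
    have hSid : {e | e ∈ p.edges} =
        {x | ∃ i, i < p.length ∧ x = s(p.getVert i, p.getVert (i+1))} := by
      ext x
      simp only [Set.mem_setOf_eq]
      rw [List.mem_iff_get]
      constructor
      · rintro ⟨⟨i, hi⟩, hg⟩
        refine ⟨i, by omega, ?_⟩
        rw [← walk_edges_get p i hi]
        exact hg.symm
      · rintro ⟨i, hi, hx⟩
        refine ⟨⟨i, by omega⟩, ?_⟩
        rw [walk_edges_get p i (by omega)]
        exact hx.symm
    have hN : ∀ i, i < p.length → (s(p.getVert i, p.getVert (i+1)) ∈ M ↔ i % 2 = 1) := by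
      intro i hi
      have h0 : 0 < p.edges.length := by omega
      have hhead : p.edges.get ⟨0, h0⟩ ∉ M := by
        apply hap.2.2
        rw [List.head?_eq_getElem?, List.getElem?_eq_getElem h0]; rfl
      have hag := alternates_get hap.2.1 i (by omega) h0
      rw [walk_edges_get p i (by omega)] at hag
      rw [hag]
      have hpar : (i % 2 = 1) ↔ ¬ (i % 2 = 0) := by omega
      tauto
    have hinj : ∀ i j, i ≤ p.length → j ≤ p.length → p.getVert i = p.getVert j → i = j :=
      fun i j hi hj h => path_getVert_inj hap.1 hi hj h
    have hE : ∀ i, i < p.length → s(p.getVert i, p.getVert (i+1)) ∈ G.edgeSet :=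
      fun i hi => p.adj_getVert_succ hi
    have hfree' : p.getVert 0 ∉ sat M := by rw [p.getVert_zero]; exact hfree
    obtain ⟨hm, hc⟩ := path_swap G M hmax.1 p.length heven' p.getVert hinj hE hN hfree'
    rw [hSid]
    have hmaxN' : IsMaximumMatching G
        (symmDiff M {x | ∃ i, i < p.length ∧ x = s(p.getVert i, p.getVert (i+1))}) := by
      refine ⟨hm, fun N hN' => ?_⟩
      rw [hc]
      exact hmax.2 N hN'
    refine ⟨hmaxN', ?_⟩
    rintro ⟨w, cyc, hcyc⟩
    exact no_alt_cycle G _ (hall _ hmaxN') cyc hcyc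
end
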